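/- For $p \ge 2$ and positive reals $M, \sigma$, define $\Psi_p(M, \sigma^2) = (\sigma^2/(p M^2))^{1/p} M$ if $p < \log(p M^2/\sigma^2)$; $\Psi_p(M, \sigma^2) = \frac{1}{2}\sqrt{p}\,\sigma$ if $p < e^2 \sigma^2/M^2$; and $\Psi_p(M, \sigma^2) = \frac{p}{e \log(p M^2/\sigma^2)} M$ if $\max\{\log(p M^2/\sigma^2), e^2 \sigma^2/M^2\} \le p$. Then $\Psi_p(M, \sigma^2) = M \cdot \sup\{ (p/s) (\sigma^2/(p M^2))^{1/s} : 2 \le s \le p \}$. -/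

import Mathlib

/-!
Write `α = σ² / (p M²) = exp (-L)` with `L = log (p M² / σ²)`. In the variable `t = 1 / s`
the function to maximize is `p · t · exp (-L t)`, which increases for `t ≤ 1 / L` and decreases
afterwards (`exp x ≥ 1 + x` is the whole calculus needed). Hence on `[2, p]` the supremum is
attained at `s = p` when `p < L`, at `s = 2` when `L < 2`, and at `s = L` otherwise; evaluating
there gives the three branches of `Ψ_p`.
-/

open Real

lemma mul_exp_neg_mul_le {L t t' : ℝ} (ht' : 0 ≤ t') (h : (t - t') * (1 - L * t') ≤ 0) :
    t * exp (-(L * t)) ≤ t' * exp (-(L * t')) := by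
  have hlin : t ≤ t' * (L * (t - t') + 1) := by nlinarith
  calc t * exp (-(L * t)) ≤ t' * exp (L * (t - t')) * exp (-(L * t)) := by
        gcongr
        exact hlin.trans (mul_le_mul_of_nonneg_left (add_one_le_exp _) ht')
    _ = t' * exp (-(L * t')) := by rw [mul_assoc, ← exp_add]; ring_nf

lemma one_div_mul_rpow_one_div_le {α s s₀ : ℝ} (hα : 0 < α) (hs : 0 < s) (hs₀ : 0 < s₀)
    (h : (s₀ - s) * (s₀ + log α) ≤ 0) :
    1 / s * α ^ (1 / s) ≤ 1 / s₀ * α ^ (1 / s₀) := by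
  have hsign : (1 / s - 1 / s₀) * (1 - -log α * (1 / s₀)) ≤ 0 := by
    have : (1 / s - 1 / s₀) * (1 - -log α * (1 / s₀)) =
        (s₀ - s) * (s₀ + log α) / (s * s₀ ^ 2) := by
      field_simp
      ring
    rw [this]
    exact div_nonpos_of_nonpos_of_nonneg h (by positivity)
  convert mul_exp_neg_mul_le (by positivity) hsign using 3 <;>
    rw [rpow_def_of_pos hα] <;> ring_nf

lemma isGreatest_div_mul_rpow_one_div {a b c α s₀ : ℝ} (ha : 0 < a) (hc : 0 ≤ c)
    (hα : 0 < α) (has₀ : a ≤ s₀) (hs₀b : s₀ ≤ b)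
    (hmax : ∀ s, a ≤ s → s ≤ b → (s₀ - s) * (s₀ + log α) ≤ 0) :
    IsGreatest {y | ∃ s, a ≤ s ∧ s ≤ b ∧ y = c / s * α ^ (1 / s)}
      (c / s₀ * α ^ (1 / s₀)) := by
  refine ⟨⟨s₀, has₀, hs₀b, rfl⟩, ?_⟩
  rintro y ⟨s, has, hsb, rfl⟩
  have h :=
    one_div_mul_rpow_one_div_le hα (ha.trans_le has) (ha.trans_le has₀) (hmax s has hsb)
  rw [div_eq_mul_one_div c s, div_eq_mul_one_div c s₀, mul_assoc, mul_assoc]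
  exact mul_le_mul_of_nonneg_left h hc

theorem psi_eq_sup (p M σ : ℝ) (hp : 2 ≤ p) (hM : 0 < M) (hσ : 0 < σ) :
    (if p < Real.log (p * M ^ 2 / σ ^ 2) then (σ ^ 2 / (p * M ^ 2)) ^ (1 / p) * M
      else if p < Real.exp 2 * σ ^ 2 / M ^ 2 then 1 / 2 * Real.sqrt p * σ
      else p / (Real.exp 1 * Real.log (p * M ^ 2 / σ ^ 2)) * M) =
      M * sSup {y : ℝ | ∃ s : ℝ, 2 ≤ s ∧ s ≤ p ∧
        y = p / s * (σ ^ 2 / (p * M ^ 2)) ^ (1 / s)} := by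
  have hp0 : 0 < p := by linarith
  set L := log (p * M ^ 2 / σ ^ 2)
  have hα : 0 < σ ^ 2 / (p * M ^ 2) := by positivity
  have hlogα : log (σ ^ 2 / (p * M ^ 2)) = -L := by rw [← log_inv, inv_div]
  have hL2 : L < 2 ↔ p < exp 2 * σ ^ 2 / M ^ 2 := by
    rw [log_lt_iff_lt_exp (by positivity), div_lt_iff₀ (by positivity),
      lt_div_iff₀ (by positivity)]
  have hsup s₀ (h2 : 2 ≤ s₀) (hs₀p : s₀ ≤ p)
      (hmax : ∀ s, 2 ≤ s → s ≤ p → (s₀ - s) * (s₀ - L) ≤ 0) :=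
    (isGreatest_div_mul_rpow_one_div two_pos hp0.le hα h2 hs₀p
      (by simpa only [hlogα, ← sub_eq_add_neg] using hmax)).csSup_eq
  split_ifs with h1 h2
  · rw [hsup p hp le_rfl fun s _ hs => mul_nonpos_of_nonneg_of_nonpos (by linarith) (by linarith),
      div_self hp0.ne', one_mul, mul_comm]
  · rw [hsup 2 le_rfl hp fun s hs _ =>
        mul_nonpos_of_nonpos_of_nonneg (by linarith) (by linarith [hL2.2 h2]),
      ← sqrt_eq_rpow, sqrt_div (sq_nonneg σ), sqrt_mul hp0.le, sqrt_sq hσ.le, sqrt_sq hM.le]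
    field_simp
    exact sq_sqrt hp0.le
  · have hL : 2 ≤ L := not_lt.1 (mt hL2.1 h2)
    rw [hsup L hL (not_lt.1 h1) fun s _ _ => by rw [sub_self, mul_zero],
      rpow_def_of_pos hα, hlogα, neg_mul, mul_one_div_cancel (zero_lt_two.trans_le hL).ne',
      exp_neg]
    field_simp
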